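/- Let d ≥ 1, n ≥ 1, r ≥ 1, let X be a symmetric order-d real tensor of dimension n (entries invariant under any permutation of indices), let λ ∈ ℝʳ, let a₁,…,a_r ∈ ℝⁿ, and define f(λ, A) = ‖X − ∑_{j=1}^r λ_j a_j^⊗d‖². Then for each j ∈ {1,…,r} and each coordinate i ∈ {1,…,n}, the partial derivative of f with respect to the ith entry of a_j exists and equals the ith entry of −2 d λ_j [ X a_j^{d−1} − ∑_{k=1}^r λ_k ⟨a_j, a_k⟩^{d−1} a_k ]. -/

import Mathlib

open Finset

private lemma prod_erase_zero {M : Type*} [CommMonoid M] {e : ℕ} (f : Fin (e+1) → M) :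
    ∏ m ∈ Finset.univ.erase (0 : Fin (e+1)), f m = ∏ k : Fin e, f k.succ := by
  rw [Fin.univ_succ, Finset.erase_cons, Finset.prod_map]
  rfl

private lemma prod_swap_erase {M : Type*} [CommMonoid M] {e : ℕ} (m : Fin (e+1))
    (f : Fin (e+1) → M) :
    ∏ m' ∈ Finset.univ.erase (0 : Fin (e+1)), f (Equiv.swap 0 m m') =
      ∏ m' ∈ Finset.univ.erase m, f m' := by
  refine Finset.prod_equiv (Equiv.swap 0 m) ?_ ?_
  · intro x
    simp only [Finset.mem_erase, Finset.mem_univ, and_true]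
    constructor
    · intro hx h
      exact hx (by simpa using congrArg (Equiv.swap 0 m) (h.trans (Equiv.swap_apply_left 0 m).symm))
    · intro hx h
      exact hx (by rw [h, Equiv.swap_apply_left])
  · intro x _; rfl

private lemma sum_pow_eq {e n : ℕ} (h : Fin n → ℝ) :
    (∑ m, h m) ^ e = ∑ jd : Fin e → Fin n, ∏ t : Fin e, h (jd t) := by
  have : (∑ m, h m) ^ e = ∏ _t : Fin e, ∑ m, h m := by
    rw [Finset.prod_const, Finset.card_univ, Fintype.card_fin]
  rw [this, Finset.prod_univ_sum]
  simp [Fintype.piFinset_univ]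

private lemma key_sym_sum {e n : ℕ} (g : (Fin (e+1) → Fin n) → ℝ)
    (hg : ∀ σ : Equiv.Perm (Fin (e+1)), ∀ idx : Fin (e+1) → Fin n, g (idx ∘ σ) = g idx)
    (w : Fin n → ℝ) (i : Fin n) :
    ∑ idx : Fin (e+1) → Fin n, g idx *
        ∑ m : Fin (e+1), (∏ m' ∈ Finset.univ.erase m, w (idx m')) *
          (if idx m = i then 1 else 0)
      = ((e : ℝ) + 1) * ∑ jd : Fin e → Fin n, g (Fin.cons i jd) * ∏ k : Fin e, w (jd k) := by
  have step0 : ∀ m : Fin (e+1),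
      (∑ idx : Fin (e+1) → Fin n, g idx * ((∏ m' ∈ Finset.univ.erase m, w (idx m')) *
          (if idx m = i then 1 else 0)))
        = ∑ idx : Fin (e+1) → Fin n, g idx * ((∏ m' ∈ Finset.univ.erase (0 : Fin (e+1)),
            w (idx m')) * (if idx 0 = i then 1 else 0)) := by
    intro m
    refine (Fintype.sum_equiv ((Equiv.swap (0 : Fin (e+1)) m).arrowCongr (Equiv.refl (Fin n))).symm
      _ _ ?_).symm
    intro idx
    have h1 : (((Equiv.swap (0 : Fin (e+1)) m).arrowCongr (Equiv.refl (Fin n))).symm idx)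
        = idx ∘ (Equiv.swap (0 : Fin (e+1)) m) := by
      funext x; simp [Equiv.arrowCongr]
    rw [h1]
    rw [hg (Equiv.swap (0 : Fin (e+1)) m) idx]
    have h3 : ∏ m' ∈ Finset.univ.erase m, w (idx (Equiv.swap (0 : Fin (e+1)) m m')) =
        ∏ m' ∈ Finset.univ.erase (0 : Fin (e+1)), w (idx m') := by
      have := (prod_swap_erase m (fun x => w (idx (Equiv.swap (0 : Fin (e+1)) m x)))).symm
      simpa using this
    simp only [Function.comp_apply, Equiv.swap_apply_right]
    rw [h3]
  have step1 : (∑ idx : Fin (e+1) → Fin n, g idx * ((∏ m' ∈ Finset.univ.erase (0 : Fin (e+1)),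
        w (idx m')) * (if idx 0 = i then 1 else 0)))
      = ∑ jd : Fin e → Fin n, g (Fin.cons i jd) * ∏ k : Fin e, w (jd k) := by
    rw [← Equiv.sum_comp (Fin.consEquiv (fun _ : Fin (e+1) => Fin n))]
    rw [Fintype.sum_prod_type]
    rw [Finset.sum_eq_single i]
    · simp only [Fin.consEquiv_apply, Fin.cons_zero, if_pos rfl, mul_one]
      refine Finset.sum_congr rfl fun jd _ => ?_
      congr 1
      rw [prod_erase_zero]
      simp
    · intro x _ hx
      simp [Fin.consEquiv_apply, hx]
    · simp
  simp_rw [Finset.mul_sum]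
  rw [Finset.sum_comm]
  calc (∑ m : Fin (e+1), ∑ idx : Fin (e+1) → Fin n, g idx *
          ((∏ m' ∈ Finset.univ.erase m, w (idx m')) * (if idx m = i then 1 else 0)))
      = ∑ _m : Fin (e+1), ∑ jd : Fin e → Fin n, g (Fin.cons i jd) * ∏ k : Fin e, w (jd k) := by
        exact Finset.sum_congr rfl fun m _ => (step0 m).trans step1
    _ = ∑ jd : Fin e → Fin n, ((e : ℝ) + 1) * (g (Fin.cons i jd) * ∏ k : Fin e, w (jd k)) := by
        rw [Finset.sum_comm]
        refine Finset.sum_congr rfl fun jd _ => ?_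
        rw [Finset.sum_const, Finset.card_univ, Fintype.card_fin, nsmul_eq_mul]
        push_cast; ring
private lemma final_alg {e n r : ℕ} (X : (Fin (e+1) → Fin n) → ℝ) (lam : Fin r → ℝ)
    (a : Fin r → Fin n → ℝ) (j : Fin r) (i : Fin n) :
    ∑ jd : Fin e → Fin n,
      (X (Fin.cons i jd) - ∑ k : Fin r, lam k * ∏ m : Fin (e+1), a k ((Fin.cons i jd : Fin (e+1) → Fin n) m)) *
        ∏ t : Fin e, a j (jd t)
    = (∑ jd : Fin e → Fin n, X (Fin.cons i jd) * ∏ k : Fin e, a j (jd k)) -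
        ∑ k : Fin r, lam k * (∑ m : Fin n, a j m * a k m) ^ e * a k i := by
  simp_rw [sub_mul, Finset.sum_sub_distrib]
  congr 1
  simp_rw [Finset.sum_mul]
  rw [Finset.sum_comm]
  refine Finset.sum_congr rfl fun k _ => ?_
  simp_rw [Fin.prod_univ_succ, Fin.cons_zero, Fin.cons_succ]
  rw [sum_pow_eq (fun m => a j m * a k m)]
  rw [Finset.mul_sum, Finset.sum_mul]
  refine Finset.sum_congr rfl fun jd _ => ?_
  rw [Finset.prod_mul_distrib]
  ring


/-- Let `X` be a symmetric tensor of order `d = e + 1 ≥ 1` and dimension `n`, and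
let `f(λ, A) = ‖X − ∑ₖ λₖ aₖ^⊗d‖²`.  Then for each `j` and each coordinate `i`,
the partial derivative of `f` with respect to the `i`th entry of `aⱼ` exists and
equals the `i`th entry of
`−2 d λⱼ [ X aⱼ^{d−1} − ∑ₖ λₖ ⟨aⱼ, aₖ⟩^{d−1} aₖ ]`,
where `(X aⱼ^{d-1})_i = ∑_{i₂,…,i_d} x_{i i₂ … i_d} ∏_{k=2}^d aⱼ_{iₖ}`.
The partial derivative is formalized as the derivative of the one-variable map
obtained by replacing the `i`th entry of `aⱼ` by `t`, evaluated at `t = aⱼᵢ`. -/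
theorem grad_factor_entry (e n r : ℕ) (hn : 1 ≤ n) (hr : 1 ≤ r)
    (X : (Fin (e + 1) → Fin n) → ℝ)
    (hsym : ∀ σ : Equiv.Perm (Fin (e + 1)), ∀ idx : Fin (e + 1) → Fin n,
      X (idx ∘ σ) = X idx)
    (lam : Fin r → ℝ) (a : Fin r → Fin n → ℝ) (j : Fin r) (i : Fin n) :
    HasDerivAt
      (fun t : ℝ => ∑ idx : Fin (e + 1) → Fin n,
        (X idx - ∑ k : Fin r, lam k *
          ∏ m : Fin (e + 1),
            Function.update a j (Function.update (a j) i t) k (idx m)) ^ 2)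
      (-2 * ((e : ℝ) + 1) * lam j *
        ((∑ jd : Fin e → Fin n, X (Fin.cons i jd) * ∏ k : Fin e, a j (jd k)) -
          ∑ k : Fin r, lam k * (∑ m : Fin n, a j m * a k m) ^ e * a k i))
      (a j i) := by
  classical
  set D : (Fin (e+1) → Fin n) → ℝ := fun idx =>
    ∑ m : Fin (e+1), (∏ m' ∈ Finset.univ.erase m, a j (idx m')) *
      (if idx m = i then 1 else 0) with hD
  set G : (Fin (e+1) → Fin n) → ℝ := fun idx =>
    X idx - ∑ k : Fin r, lam k * ∏ m : Fin (e+1), a k (idx m) with hG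
  have hfac : ∀ (idx : Fin (e+1) → Fin n) (m : Fin (e+1)),
      HasDerivAt (fun t : ℝ => Function.update (a j) i t (idx m))
        (if idx m = i then 1 else 0) (a j i) := by
    intro idx m
    by_cases h : idx m = i
    · have hfun : (fun t : ℝ => Function.update (a j) i t (idx m)) = fun t => t := by
        funext t; rw [h, Function.update_self]
      rw [hfun, if_pos h]
      exact hasDerivAt_id (a j i)
    · simp only [Function.update_of_ne h, if_neg h]
      exact hasDerivAt_const _ _
  have hprod : ∀ idx : Fin (e+1) → Fin n,
      HasDerivAt (fun t : ℝ => ∏ m : Fin (e+1), Function.update (a j) i t (idx m))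
        (D idx) (a j i) := by
    intro idx
    have h := HasDerivAt.fun_finsetProd (u := (Finset.univ : Finset (Fin (e+1))))
      (f := fun m t => Function.update (a j) i t (idx m))
      (f' := fun m => if idx m = i then 1 else 0) (fun m _ => hfac idx m)
    simpa [hD, Function.update_eq_self, smul_eq_mul] using h
  have hterm : ∀ (idx : Fin (e+1) → Fin n) (k : Fin r),
      HasDerivAt (fun t : ℝ => lam k *
          ∏ m : Fin (e+1), Function.update a j (Function.update (a j) i t) k (idx m))
        (if k = j then lam j * D idx else 0) (a j i) := by
    intro idx k
    by_cases hk : k = j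
    · subst hk
      simp only [Function.update_self, if_pos rfl]
      exact (hprod idx).const_mul (lam k)
    · simp only [Function.update_of_ne hk, if_neg hk]
      exact hasDerivAt_const _ _
  have hinner : ∀ idx : Fin (e+1) → Fin n,
      HasDerivAt (fun t : ℝ => X idx - ∑ k : Fin r, lam k *
          ∏ m : Fin (e+1), Function.update a j (Function.update (a j) i t) k (idx m))
        (-(lam j * D idx)) (a j i) := by
    intro idx
    have h1 := HasDerivAt.fun_sum (u := (Finset.univ : Finset (Fin r))) (fun k _ => hterm idx k)
    have h2 : (∑ k : Fin r, if k = j then lam j * D idx else 0) = lam j * D idx := by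
      simp
    rw [h2] at h1
    simpa using (hasDerivAt_const (a j i) (X idx)).fun_sub h1
  have hsq : ∀ idx : Fin (e+1) → Fin n,
      HasDerivAt (fun t : ℝ => (X idx - ∑ k : Fin r, lam k *
          ∏ m : Fin (e+1), Function.update a j (Function.update (a j) i t) k (idx m)) ^ 2)
        (2 * G idx ^ 1 * -(lam j * D idx)) (a j i) := by
    intro idx
    have h := (hinner idx).fun_pow 2
    have hval : (X idx - ∑ k : Fin r, lam k *
        ∏ m : Fin (e+1), Function.update a j (Function.update (a j) i (a j i)) k (idx m))
        = G idx := by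
      simp [hG, Function.update_eq_self]
    rw [hval] at h
    simpa using h
  have htot := HasDerivAt.fun_sum (u := (Finset.univ : Finset (Fin (e+1) → Fin n)))
    (fun idx _ => hsq idx)
  have hGsym : ∀ σ : Equiv.Perm (Fin (e+1)), ∀ idx : Fin (e+1) → Fin n,
      G (idx ∘ σ) = G idx := by
    intro σ idx
    simp only [hG]
    rw [hsym σ idx]
    congr 1
    refine Finset.sum_congr rfl fun k _ => ?_
    congr 1
    exact Equiv.prod_comp σ (fun m => a k (idx m))
  have hkey := key_sym_sum G hGsym (a j) i
  have hvaleq : (∑ idx : Fin (e+1) → Fin n, 2 * G idx ^ 1 * -(lam j * D idx))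
      = -2 * ((e : ℝ) + 1) * lam j *
        ((∑ jd : Fin e → Fin n, X (Fin.cons i jd) * ∏ k : Fin e, a j (jd k)) -
          ∑ k : Fin r, lam k * (∑ m : Fin n, a j m * a k m) ^ e * a k i) := by
    have h1 : ∀ idx : Fin (e+1) → Fin n,
        2 * G idx ^ 1 * -(lam j * D idx) = (-2 * lam j) * (G idx * D idx) := by
      intro idx; ring
    simp_rw [h1]
    rw [← Finset.mul_sum]
    have h2 : (∑ idx : Fin (e+1) → Fin n, G idx * D idx)
        = ((e : ℝ) + 1) * ∑ jd : Fin e → Fin n, G (Fin.cons i jd) * ∏ k : Fin e, a j (jd k) := by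
      simpa [hD] using hkey
    rw [h2]
    have h3 : (∑ jd : Fin e → Fin n, G (Fin.cons i jd) * ∏ k : Fin e, a j (jd k))
        = (∑ jd : Fin e → Fin n, X (Fin.cons i jd) * ∏ k : Fin e, a j (jd k)) -
          ∑ k : Fin r, lam k * (∑ m : Fin n, a j m * a k m) ^ e * a k i := by
      simpa [hG] using final_alg X lam a j i
    rw [h3]
    ring
  rw [hvaleq] at htot
  exact htot
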